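/- For r ∈ [0,1] let D_r denote the probability distribution on F₂² assigning probability 1−r to (0,0) and probability r/3 to each of (0,1), (1,0), (1,1). Let p ∈ [0, 3/4), q ∈ [p, 3/4], and set u := (q−p)/(1 − (4/3)p). Then u ∈ [0, 3/4], and if X ~ D_p and Y ~ D_u are independent, then X + Y ~ D_q (addition taken componentwise in F₂). -/
import Mathlib


open scoped BigOperators Classical

/-- The depolarizing distribution `D_r` on `F₂²`: `(0,0)` has probability `1 - r`,
each of `(0,1)`, `(1,0)`, `(1,1)` has probability `r/3`. -/
noncomputable def dPair (r : ℝ) (x : ZMod 2 × ZMod 2) : ℝ :=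
  if x = (0, 0) then 1 - r else r / 3

/-- Depolarizing convolution: for `p ∈ [0, 3/4)`, `q ∈ [p, 3/4]` and
`u = (q - p)/(1 - (4/3)p)` we have `u ∈ [0, 3/4]`, and if `X ∼ D_p` and `Y ∼ D_u` are
independent, then `X + Y ∼ D_q`. -/
theorem stmt14 (p q : ℝ) (hp0 : 0 ≤ p) (hp1 : p < 3 / 4) (hpq : p ≤ q)
    (hq : q ≤ 3 / 4) :
    0 ≤ (q - p) / (1 - (4 / 3) * p) ∧
    (q - p) / (1 - (4 / 3) * p) ≤ 3 / 4 ∧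
    ∀ z : ZMod 2 × ZMod 2,
      (∑ x : ZMod 2 × ZMod 2,
          dPair p x * dPair ((q - p) / (1 - (4 / 3) * p)) (z + x))
        = dPair q z := by
  have hden : 0 < 1 - (4 / 3) * p := by linarith
  refine ⟨div_nonneg (by linarith) hden.le, ?_, ?_⟩
  · rw [div_le_iff₀ hden]; linarith
  · intro z
    set u := (q - p) / (1 - (4 / 3) * p) with hu
    have hu' : u * (1 - (4 / 3) * p) = q - p := by
      rw [hu, div_mul_cancel₀ _ hden.ne']
    have hsum : ∀ w : ZMod 2 × ZMod 2,
        (∑ x : ZMod 2 × ZMod 2, dPair p x * dPair u (w + x)) =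
        dPair p (0,0) * dPair u (w + (0,0)) +
        dPair p (0,1) * dPair u (w + (0,1)) +
        dPair p (1,0) * dPair u (w + (1,0)) +
        dPair p (1,1) * dPair u (w + (1,1)) := by
      intro w
      have huniv : (Finset.univ : Finset (ZMod 2)) = {0, 1} := by decide
      rw [Fintype.sum_prod_type]
      simp only [huniv, Finset.sum_insert (by decide : (0 : ZMod 2) ∉ ({1} : Finset (ZMod 2))),
        Finset.sum_singleton]
      ring
    fin_cases z <;> rw [hsum] <;>
      simp (config := { decide := true }) [dPair, Prod.ext_iff] <;> nlinarith [hu']
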